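/- arXiv:2304.02462 — 5 statements merged into one kernel-verified Lean document; each statement's English description precedes it below -/
import Mathlib

section
/- Under the QND assumption, the pointer populations satisfy the multiplicative recurrence: if $\rho_{n+1} = \Phi_{i_n}(\rho_n)/\operatorname{tr}(\Phi_{i_n}(\rho_n))$ and $q_\alpha(n) = \operatorname{tr}(\ket{\alpha}\bra{\alpha}\rho_n)$, then $q_\alpha(n+1) = q_\alpha(n)\, p(i_n|\alpha)/p_n(i_n)$, where $p_n(i) = \operatorname{tr}(\Phi_i(\rho_n))$. -/
open Matrix
open scoped BigOperators ComplexOrder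

/-- The imperfect-measurement Kraus map `Φ_i(ρ) = ∑_j η_{ij} V_j ρ V_j†`. -/
noncomputable def Phi {d : ℕ} {Y : Type*} [Fintype Y]
    (η : Y → Y → ℝ) (V : Y → Matrix (Fin d) (Fin d) ℂ) (i : Y)
    (ρ : Matrix (Fin d) (Fin d) ℂ) : Matrix (Fin d) (Fin d) ℂ :=
  ∑ j, (η i j : ℂ) • (V j * ρ * (V j)ᴴ)

/-- The rank-one projector `|α⟩⟨α|` onto the pointer vector `v α`. -/
def proj {d : ℕ} {P : Type*} (v : P → (Fin d → ℂ)) (α : P) :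
    Matrix (Fin d) (Fin d) ℂ :=
  Matrix.vecMulVec (v α) (star (v α))

lemma vecMulVec_mul_vecMulVec {d : ℕ} (a b c e : Fin d → ℂ) :
    Matrix.vecMulVec a b * Matrix.vecMulVec c e = (b ⬝ᵥ c) • Matrix.vecMulVec a e := by
  ext i j
  simp [Matrix.mul_apply, Matrix.vecMulVec_apply, dotProduct, Finset.mul_sum, Finset.sum_mul]
  ring_nf
  exact Finset.sum_congr rfl fun k _ => by ring

lemma proj_mul_proj {d : ℕ} {P : Type*} [DecidableEq P] (v : P → (Fin d → ℂ))
    (h_orth : ∀ α β, star (v α) ⬝ᵥ v β = if α = β then 1 else 0) (α β : P) :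
    proj v α * proj v β = if α = β then proj v α else 0 := by
  unfold proj
  rw [vecMulVec_mul_vecMulVec, h_orth]
  by_cases h : α = β <;> simp [h]

/-- under the QND assumption, the pointer populations
`q_α(n) = tr(|α⟩⟨α| ρ_n)` of the normalized trajectory
`ρ_{n+1} = Φ_{i_n}(ρ_n)/tr(Φ_{i_n}(ρ_n))` satisfy the multiplicative recurrence
`q_α(n+1) = q_α(n) p(i_n|α) / p_n(i_n)`. -/
theorem stmt3 {d : ℕ} {Y P : Type*} [Fintype Y] [Fintype P] [DecidableEq P]
    (η : Y → Y → ℝ) (V : Y → Matrix (Fin d) (Fin d) ℂ)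
    (v : P → (Fin d → ℂ)) (c : Y → P → ℂ)
    (hη_nonneg : ∀ i j, 0 ≤ η i j)
    (h_orth : ∀ α β, star (v α) ⬝ᵥ v β = if α = β then 1 else 0)
    (h_complete : ∑ α, proj v α = 1)
    (h_diag : ∀ j, V j = ∑ α, c j α • proj v α)
    (ρ : ℕ → Matrix (Fin d) (Fin d) ℂ) (i : ℕ → Y)
    (hρ : ∀ n, (ρ n).PosSemidef) (hρtr : ∀ n, (ρ n).trace = 1)
    (h_norm : ∀ n, (Phi η V (i n) (ρ n)).trace ≠ 0)
    (h_update : ∀ n, ρ (n + 1)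
      = ((Phi η V (i n) (ρ n)).trace)⁻¹ • Phi η V (i n) (ρ n))
    (α : P) (n : ℕ) :
    (proj v α * ρ (n + 1)).trace
      = (proj v α * ρ n).trace * (Phi η V (i n) (proj v α)).trace
          / (Phi η V (i n) (ρ n)).trace := by
  have hproj : ∀ β γ, proj v β * proj v γ = if β = γ then proj v β else 0 :=
    proj_mul_proj v h_orth
  -- proj is Hermitian
  have hprojH : (proj v α)ᴴ = proj v α := by
    ext i j
    simp [proj, Matrix.vecMulVec_apply, mul_comm]
  -- trace of proj v α is 1
  have htrproj : (proj v α).trace = 1 := by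
    have := h_orth α α
    simp only [if_pos rfl] at this
    rw [Matrix.trace]
    simpa [Matrix.trace, Matrix.diag, proj, Matrix.vecMulVec_apply, dotProduct, mul_comm]
      using this
  -- V j * proj v α = c j α • proj v α and friends
  have hVP : ∀ j, V j * proj v α = c j α • proj v α := by
    intro j
    rw [h_diag j, Finset.sum_mul]
    rw [Finset.sum_eq_single α]
    · rw [smul_mul_assoc, hproj, if_pos rfl]
    · intro b _ hb
      rw [smul_mul_assoc, hproj, if_neg hb, smul_zero]
    · intro h; exact absurd (Finset.mem_univ α) h
  have hPV : ∀ j, proj v α * V j = c j α • proj v α := by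
    intro j
    rw [h_diag j, Finset.mul_sum]
    rw [Finset.sum_eq_single α]
    · rw [Matrix.mul_smul, hproj, if_pos rfl]
    · intro b _ hb
      rw [Matrix.mul_smul, hproj, if_neg (fun h => hb h.symm), smul_zero]
    · intro h; exact absurd (Finset.mem_univ α) h
  have hPVH : ∀ j, proj v α * (V j)ᴴ = star (c j α) • proj v α := by
    intro j
    have := congrArg Matrix.conjTranspose (hVP j)
    rw [Matrix.conjTranspose_mul, hprojH, Matrix.conjTranspose_smul, hprojH] at this
    exact this
  have hVHP : ∀ j, (V j)ᴴ * proj v α = star (c j α) • proj v α := by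
    intro j
    have := congrArg Matrix.conjTranspose (hPV j)
    rw [Matrix.conjTranspose_mul, hprojH, Matrix.conjTranspose_smul, hprojH] at this
    exact this
  -- key trace identities
  have key1 : ∀ j (σ : Matrix (Fin d) (Fin d) ℂ),
      (proj v α * (V j * σ * (V j)ᴴ)).trace = (star (c j α) * c j α) * (proj v α * σ).trace := by
    intro j σ
    rw [Matrix.trace_mul_comm, Matrix.mul_assoc, hVHP j, Matrix.mul_smul, Matrix.trace_smul,
      Matrix.mul_assoc, Matrix.trace_mul_comm, Matrix.mul_assoc, hPV j, Matrix.mul_smul,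
      Matrix.trace_smul, Matrix.trace_mul_comm]
    simp [smul_eq_mul]; ring
  have key2 : ∀ j, (V j * proj v α * (V j)ᴴ).trace = star (c j α) * c j α := by
    intro j
    rw [hVP j, Matrix.smul_mul, hPVH j, smul_smul, Matrix.trace_smul, htrproj]
    simp [smul_eq_mul]; ring
  -- trace of Phi on proj
  have hPhiProj : (Phi η V (i n) (proj v α)).trace
      = ∑ j, (η (i n) j : ℂ) * (star (c j α) * c j α) := by
    unfold Phi
    rw [Matrix.trace_sum]
    exact Finset.sum_congr rfl fun j _ => by rw [Matrix.trace_smul, key2 j, smul_eq_mul]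
  have hPhiRho : (proj v α * Phi η V (i n) (ρ n)).trace
      = (∑ j, (η (i n) j : ℂ) * (star (c j α) * c j α)) * (proj v α * ρ n).trace := by
    unfold Phi
    rw [Finset.mul_sum, Finset.sum_mul, Matrix.trace_sum]
    exact Finset.sum_congr rfl fun j _ => by
      rw [Matrix.mul_smul, Matrix.trace_smul, key1 j, smul_eq_mul]; ring
  rw [h_update n, Matrix.mul_smul, Matrix.trace_smul, smul_eq_mul, hPhiRho, hPhiProj]
  field_simp
end

section
/- The pointer population process is a bounded martingale: in the QND setting, the process $q_\alpha(n) = \operatorname{tr}(\ket{\alpha}\bra{\alpha}\rho_n)$ satisfies $\mathbb{E}[q_\alpha(n+1) \mid \mathcal{F}_n] = q_\alpha(n)$, where $\mathcal{F}_n$ is the sigma-algebra generated by the first $n$ measurement results and the conditional law of $i_n$ given $\mathcal{F}_n$ assigns probability $p_n(i) = \operatorname{tr}(\Phi_i(\rho_n))$ to outcome $i$. -/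
open Matrix MeasureTheory Filter
open scoped BigOperators ComplexOrder Topology ENNReal

/-- The quantum trajectory `ρ_{n+1} = Φ_{ω_n}(ρ_n)/tr(Φ_{ω_n}(ρ_n))` starting
from `ρ0`, along the outcome sequence `ω`. -/
noncomputable def traj {d : ℕ} {Y : Type*} [Fintype Y]
    (η : Y → Y → ℝ) (V : Y → Matrix (Fin d) (Fin d) ℂ)
    (ρ0 : Matrix (Fin d) (Fin d) ℂ) : ℕ → (ℕ → Y) → Matrix (Fin d) (Fin d) ℂ
  | 0, _ => ρ0
  | n + 1, ω =>
      ((Phi η V (ω n) (traj η V ρ0 n ω)).trace)⁻¹ • Phi η V (ω n) (traj η V ρ0 n ω)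

/-- The unnormalized evolution of `ρ0` along a finite word of outcomes. -/
noncomputable def evolve {d : ℕ} {Y : Type*} [Fintype Y]
    (η : Y → Y → ℝ) (V : Y → Matrix (Fin d) (Fin d) ℂ)
    (ρ0 : Matrix (Fin d) (Fin d) ℂ) (l : List Y) : Matrix (Fin d) (Fin d) ℂ :=
  l.foldl (fun ρ i => Phi η V i ρ) ρ0

/-- The cylinder set of outcome sequences starting with the word `w`. -/
def cyl {Y : Type*} {n : ℕ} (w : Fin n → Y) : Set (ℕ → Y) :=
  {ω | ∀ k : Fin n, ω (k : ℕ) = w k}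

/-- The natural filtration generated by the first `n` measurement results. -/
def cylFiltration (Y : Type*) [MeasurableSpace Y] :
    Filtration ℕ (MeasurableSpace.pi : MeasurableSpace (ℕ → Y)) where
  seq n := MeasurableSpace.comap (fun ω (k : Fin n) => ω (k : ℕ)) inferInstance
  mono' := by
    intro m n h
    show MeasurableSpace.comap (fun (ω : ℕ → Y) (k : Fin m) => ω (k : ℕ)) inferInstance
      ≤ MeasurableSpace.comap (fun (ω : ℕ → Y) (k : Fin n) => ω (k : ℕ)) inferInstance
    have heq : (fun (ω : ℕ → Y) (k : Fin m) => ω (k : ℕ))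
        = (fun (x : Fin n → Y) (k : Fin m) => x (Fin.castLE h k))
          ∘ (fun (ω : ℕ → Y) (k : Fin n) => ω (k : ℕ)) := rfl
    rw [heq, ← MeasurableSpace.comap_comp]
    exact MeasurableSpace.comap_mono
      (Measurable.comap_le (measurable_pi_lambda _ fun k => measurable_pi_apply _))
  le' n :=
    Measurable.comap_le (measurable_pi_lambda _ fun k => measurable_pi_apply _)

set_option linter.unusedSectionVars false
section AuxQND


lemma Phi_smul {d : ℕ} {Y : Type*} [Fintype Y] (η : Y → Y → ℝ)
    (V : Y → Matrix (Fin d) (Fin d) ℂ) (i : Y) (a : ℂ) (ρ : Matrix (Fin d) (Fin d) ℂ) :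
    Phi η V i (a • ρ) = a • Phi η V i ρ := by
  rw [Phi, Phi, Finset.smul_sum]
  refine Finset.sum_congr rfl fun j _ => ?_
  rw [Matrix.mul_smul, Matrix.smul_mul, smul_comm]

lemma Phi_zero {d : ℕ} {Y : Type*} [Fintype Y] (η : Y → Y → ℝ)
    (V : Y → Matrix (Fin d) (Fin d) ℂ) (i : Y) : Phi η V i 0 = 0 := by
  simp [Phi]

lemma smul_posSemidef {d : ℕ} {r : ℝ} (hr : 0 ≤ r) {M : Matrix (Fin d) (Fin d) ℂ}
    (hM : M.PosSemidef) : ((r : ℂ) • M).PosSemidef := by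
  constructor
  · unfold Matrix.IsHermitian
    rw [Matrix.conjTranspose_smul, hM.1.eq]
    congr 1
    simp
  · exact (hM.smul (Complex.zero_le_real.mpr hr)).2

lemma sum_posSemidef {d : ℕ} {ι : Type*} (s : Finset ι) (f : ι → Matrix (Fin d) (Fin d) ℂ)
    (hf : ∀ i ∈ s, (f i).PosSemidef) : (∑ i ∈ s, f i).PosSemidef := by
  classical
  induction s using Finset.induction_on with
  | empty => simpa using Matrix.PosSemidef.zero
  | insert _ _ h ih =>
      rw [Finset.sum_insert h]
      exact (hf _ (Finset.mem_insert_self _ _)).add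
        (ih fun i hi => hf i (Finset.mem_insert_of_mem hi))

lemma Phi_posSemidef {d : ℕ} {Y : Type*} [Fintype Y] {η : Y → Y → ℝ}
    (hη : ∀ i j, 0 ≤ η i j) (V : Y → Matrix (Fin d) (Fin d) ℂ) (i : Y)
    {ρ : Matrix (Fin d) (Fin d) ℂ} (hρ : ρ.PosSemidef) : (Phi η V i ρ).PosSemidef := by
  refine sum_posSemidef _ _ fun j _ => smul_posSemidef (hη i j) ?_
  simpa [Matrix.mul_assoc] using hρ.mul_mul_conjTranspose_same (V j)

lemma psd_trace {d : ℕ} {M : Matrix (Fin d) (Fin d) ℂ} (hM : M.PosSemidef) :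
    ∃ t : ℝ, 0 ≤ t ∧ M.trace = (t : ℂ) ∧ (t = 0 → M = 0) := by
  have h := Complex.le_def.mp hM.trace_nonneg
  have htr : M.trace = (M.trace.re : ℂ) :=
    Complex.ext (by simp) (by rw [Complex.ofReal_im, ← h.2, Complex.zero_im])
  refine ⟨M.trace.re, h.1, htr, fun ht => hM.trace_eq_zero_iff.mp ?_⟩
  rw [htr, ht, Complex.ofReal_zero]


section Key
variable {d : ℕ} {Y P : Type*} [Fintype Y] [Fintype P] [DecidableEq P]
  (η : Y → Y → ℝ) (V : Y → Matrix (Fin d) (Fin d) ℂ)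
  (v : P → (Fin d → ℂ)) (c : Y → P → ℂ)

lemma sum_mulVec' {ι : Type*} (s : Finset ι) (f : ι → Matrix (Fin d) (Fin d) ℂ)
    (x : Fin d → ℂ) : (∑ i ∈ s, f i) *ᵥ x = ∑ i ∈ s, f i *ᵥ x := by
  ext a
  simp only [Matrix.mulVec, dotProduct, Matrix.sum_apply, Finset.sum_apply, Finset.sum_mul]
  rw [Finset.sum_comm]

lemma trace_proj_mul (α : P) (M : Matrix (Fin d) (Fin d) ℂ) :
    (proj v α * M).trace = star (v α) ⬝ᵥ (M *ᵥ v α) := by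
  rw [Matrix.trace, dotProduct]
  simp only [Matrix.diag_apply, Matrix.mul_apply, proj, Matrix.vecMulVec_apply,
    Matrix.mulVec, dotProduct, Pi.star_apply]
  rw [Finset.sum_comm]
  refine Finset.sum_congr rfl fun b _ => ?_
  rw [Finset.mul_sum]
  refine Finset.sum_congr rfl fun a _ => ?_
  ring

lemma trace_proj_nonneg (α : P) {M : Matrix (Fin d) (Fin d) ℂ} (hM : M.PosSemidef) :
    ∃ p : ℝ, 0 ≤ p ∧ (proj v α * M).trace = (p : ℂ) := by
  have h := hM.dotProduct_mulVec_nonneg (v α)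
  rw [trace_proj_mul]
  refine ⟨(star (v α) ⬝ᵥ (M *ᵥ v α)).re, ?_, ?_⟩
  · exact (Complex.le_def.mp h).1
  · have him := (Complex.le_def.mp h).2
    apply Complex.ext
    · rfl
    · simp [← him]

variable (h_orth : ∀ α β, star (v α) ⬝ᵥ v β = if α = β then 1 else 0)
  (h_diag : ∀ j, V j = ∑ α, c j α • proj v α)

include h_orth h_diag in
lemma mulVec_V (j : Y) (α : P) : V j *ᵥ v α = c j α • v α := by
  rw [h_diag]
  rw [sum_mulVec']
  have : ∀ β, (c j β • proj v β) *ᵥ v α = (if β = α then c j α • v α else 0) := by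
    intro β
    rw [Matrix.smul_mulVec]
    have : proj v β *ᵥ v α = (star (v β) ⬝ᵥ v α) • v β := by
      ext a
      simp only [proj, Matrix.mulVec, Matrix.vecMulVec_apply, dotProduct, Pi.smul_apply,
        Pi.star_apply, smul_eq_mul, Finset.sum_mul, Finset.mul_sum, Complex.star_def]
      exact Finset.sum_congr rfl fun x _ => by ring
    rw [this, h_orth]
    by_cases h : β = α <;> simp [h]
  rw [Finset.sum_congr rfl fun β _ => this β]
  simp

include h_orth h_diag in
lemma mulVec_VH (j : Y) (α : P) : (V j)ᴴ *ᵥ v α = (starRingEnd ℂ) (c j α) • v α := by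
  have hproj : ∀ β, (proj v β)ᴴ = proj v β := by
    intro β
    ext a b
    simp [proj, Matrix.conjTranspose_apply, Matrix.vecMulVec_apply, mul_comm]
  have : (V j)ᴴ = ∑ β, (starRingEnd ℂ) (c j β) • proj v β := by
    rw [h_diag, Matrix.conjTranspose_sum]
    refine Finset.sum_congr rfl fun β _ => ?_
    rw [Matrix.conjTranspose_smul, hproj]
    rfl
  rw [this, sum_mulVec']
  have h2 : ∀ β, ((starRingEnd ℂ) (c j β) • proj v β) *ᵥ v α
      = (if β = α then (starRingEnd ℂ) (c j α) • v α else 0) := by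
    intro β
    rw [Matrix.smul_mulVec]
    have : proj v β *ᵥ v α = (star (v β) ⬝ᵥ v α) • v β := by
      ext a
      simp only [proj, Matrix.mulVec, Matrix.vecMulVec_apply, dotProduct, Pi.smul_apply,
        Pi.star_apply, smul_eq_mul, Finset.sum_mul, Finset.mul_sum, Complex.star_def]
      exact Finset.sum_congr rfl fun x _ => by ring
    rw [this, h_orth]
    by_cases h : β = α <;> simp [h]
  rw [Finset.sum_congr rfl fun β _ => h2 β]
  simp

include h_orth h_diag in
lemma vecMul_V (j : Y) (α : P) : star (v α) ᵥ* V j = c j α • star (v α) := by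
  have h := congrArg star (mulVec_VH V v c h_orth h_diag j α)
  rw [Matrix.star_mulVec, Matrix.conjTranspose_conjTranspose, star_smul] at h
  simpa using h

include h_orth h_diag in
lemma trace_proj_VrhoVH (j : Y) (α : P) (ρ : Matrix (Fin d) (Fin d) ℂ) :
    (proj v α * (V j * ρ * (V j)ᴴ)).trace
      = c j α * (starRingEnd ℂ) (c j α) * (proj v α * ρ).trace := by
  rw [trace_proj_mul, trace_proj_mul, ← Matrix.mulVec_mulVec, ← Matrix.mulVec_mulVec,
    mulVec_VH V v c h_orth h_diag, Matrix.mulVec_smul, Matrix.mulVec_smul,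
    dotProduct_smul, Matrix.dotProduct_mulVec, vecMul_V V v c h_orth h_diag,
    smul_dotProduct]
  simp [mul_assoc, mul_comm, mul_left_comm]

include h_orth h_diag in
lemma sum_c_sq (hV : ∑ j, (V j)ᴴ * V j = 1) (α : P) :
    ∑ j, c j α * (starRingEnd ℂ) (c j α) = 1 := by
  have h1 : (proj v α * (∑ j, (V j)ᴴ * V j)).trace = (proj v α : Matrix (Fin d) (Fin d) ℂ).trace := by
    rw [hV, Matrix.mul_one]
  have h2 : (proj v α * (∑ j, (V j)ᴴ * V j)).trace
      = ∑ j, c j α * (starRingEnd ℂ) (c j α) := by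
    rw [Finset.mul_sum, Matrix.trace_sum]
    refine Finset.sum_congr rfl fun j _ => ?_
    rw [trace_proj_mul, ← Matrix.mulVec_mulVec, mulVec_V V v c h_orth h_diag,
      Matrix.mulVec_smul, mulVec_VH V v c h_orth h_diag, dotProduct_smul, dotProduct_smul,
      h_orth]
    simp [mul_comm]
  have h3 : (proj v α : Matrix (Fin d) (Fin d) ℂ).trace = 1 := by
    have := trace_proj_mul v α (1 : Matrix (Fin d) (Fin d) ℂ)
    rw [Matrix.mul_one, Matrix.one_mulVec, h_orth] at this
    simpa using this
  rw [← h2, h1, h3]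

include h_orth h_diag in
lemma key_identity (hV : ∑ j, (V j)ᴴ * V j = 1) (hη_sum : ∀ j, ∑ i, η i j = 1)
    (α : P) (ρ : Matrix (Fin d) (Fin d) ℂ) :
    ∑ i, (proj v α * Phi η V i ρ).trace = (proj v α * ρ).trace := by
  have hterm : ∀ i, (proj v α * Phi η V i ρ).trace
      = ∑ j, (η i j : ℂ) * (c j α * (starRingEnd ℂ) (c j α)) * (proj v α * ρ).trace := by
    intro i
    rw [Phi, Finset.mul_sum, Matrix.trace_sum]
    refine Finset.sum_congr rfl fun j _ => ?_
    rw [Matrix.mul_smul, Matrix.trace_smul, trace_proj_VrhoVH V v c h_orth h_diag]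
    simp [mul_assoc]
  rw [Finset.sum_congr rfl fun i _ => hterm i, Finset.sum_comm]
  have : ∀ j, ∑ i, (η i j : ℂ) * (c j α * (starRingEnd ℂ) (c j α)) * (proj v α * ρ).trace
      = (c j α * (starRingEnd ℂ) (c j α)) * (proj v α * ρ).trace := by
    intro j
    rw [← Finset.sum_mul, ← Finset.sum_mul]
    have : ∑ i, ((η i j : ℝ) : ℂ) = ((∑ i, η i j : ℝ) : ℂ) := by push_cast; rfl
    rw [this, hη_sum]
    simp
  rw [Finset.sum_congr rfl fun j _ => this j, ← Finset.sum_mul,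
    sum_c_sq V v c h_orth h_diag hV, one_mul]

end Key



section Traj
variable {d : ℕ} {Y : Type*} [Fintype Y]
  (η : Y → Y → ℝ) (V : Y → Matrix (Fin d) (Fin d) ℂ)
  (ρ0 : Matrix (Fin d) (Fin d) ℂ)

lemma evolve_concat (l : List Y) (i : Y) :
    evolve η V ρ0 (l ++ [i]) = Phi η V i (evolve η V ρ0 l) := by
  simp [evolve, List.foldl_append]

lemma evolve_psd (hη : ∀ i j, 0 ≤ η i j) (hρ0 : ρ0.PosSemidef) (l : List Y) :
    (evolve η V ρ0 l).PosSemidef := by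
  induction l generalizing ρ0 with
  | nil => exact hρ0
  | cons i l ih =>
      rw [evolve, List.foldl_cons]
      exact ih _ (Phi_posSemidef hη V i hρ0)

lemma ofFn_restrict (n : ℕ) (ω : ℕ → Y) :
    List.ofFn (fun k : Fin (n+1) => ω ↑k) = List.ofFn (fun k : Fin n => ω ↑k) ++ [ω n] := by
  rw [List.ofFn_succ']
  simp [List.concat_eq_append]

lemma traj_formula (hη : ∀ i j, 0 ≤ η i j) (hρ0 : ρ0.PosSemidef) (hρ0tr : ρ0.trace = 1)
    (n : ℕ) (ω : ℕ → Y) :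
    traj η V ρ0 n ω
      = ((evolve η V ρ0 (List.ofFn fun k : Fin n => ω ↑k)).trace)⁻¹
          • evolve η V ρ0 (List.ofFn fun k : Fin n => ω ↑k) := by
  induction n with
  | zero =>
      show ρ0 = _
      simp [evolve, hρ0tr]
  | succ n ih =>
      have hE : (evolve η V ρ0 (List.ofFn fun k : Fin n => ω ↑k)).PosSemidef :=
        evolve_psd η V ρ0 hη hρ0 _
      set E := evolve η V ρ0 (List.ofFn fun k : Fin n => ω ↑k) with hEdef
      have hstep : evolve η V ρ0 (List.ofFn fun k : Fin (n+1) => ω ↑k) = Phi η V (ω n) E := by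
        rw [ofFn_restrict, evolve_concat]
      show ((Phi η V (ω n) (traj η V ρ0 n ω)).trace)⁻¹ • Phi η V (ω n) (traj η V ρ0 n ω) = _
      rw [hstep, ih, Phi_smul, Matrix.trace_smul, smul_smul, smul_eq_mul]
      by_cases htE : E.trace = 0
      · obtain ⟨t, ht0, htr, htz⟩ := psd_trace hE
        have : E = 0 := htz (by exact_mod_cast htr ▸ htE)
        simp [this, Phi_zero]
      · congr 1
        field_simp

end Traj

end AuxQND


section AuxQND2

lemma psd_trace_re {d : ℕ} {M : Matrix (Fin d) (Fin d) ℂ} (hM : M.PosSemidef) :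
    0 ≤ M.trace.re ∧ M.trace = (M.trace.re : ℂ) ∧ (M.trace.re = 0 → M = 0) := by
  obtain ⟨t, h0, he, hz⟩ := psd_trace hM
  have hre : M.trace.re = t := by rw [he]; simp
  exact ⟨hre ▸ h0, by rw [hre]; exact he, fun h => hz (hre ▸ h)⟩

lemma trace_proj_re {d : ℕ} {P : Type*} [Fintype P] [DecidableEq P] (v : P → (Fin d → ℂ)) (α : P)
    {M : Matrix (Fin d) (Fin d) ℂ} (hM : M.PosSemidef) :
    0 ≤ (proj v α * M).trace.re ∧ (proj v α * M).trace = ((proj v α * M).trace.re : ℂ) := by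
  obtain ⟨p, h0, he⟩ := trace_proj_nonneg v α hM
  have hre : (proj v α * M).trace.re = p := by rw [he]; simp
  exact ⟨hre ▸ h0, by rw [hre]; exact he⟩

lemma ofFn_snoc {Y : Type*} (n : ℕ) (w : Fin n → Y) (i : Y) :
    List.ofFn (Fin.snoc w i : Fin (n+1) → Y) = List.ofFn w ++ [i] := by
  rw [List.ofFn_succ']
  simp [List.concat_eq_append]

lemma cyl_eq {Y : Type*} {n : ℕ} (w : Fin n → Y) :
    cyl w = (fun (ω : ℕ → Y) (k : Fin n) => ω ↑k) ⁻¹' {w} := by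
  ext ω
  simp [cyl, Set.mem_preimage, Set.mem_singleton_iff, funext_iff]

end AuxQND2

/-- the pointer population process `q_α(n) = tr(|α⟩⟨α| ρ_n)` of the
QND quantum trajectory is a bounded martingale for the natural filtration of the
measurement results, under the probability measure whose cylinder probabilities
are `ℙ(i_0 = w_0, …, i_{n-1} = w_{n-1}) = tr(Φ_{w_{n-1}} ∘ ⋯ ∘ Φ_{w_0}(ρ_0))`
(equivalently, the conditional law of `i_n` given `F_n` assigns probability
`p_n(i) = tr(Φ_i(ρ_n))` to outcome `i`). -/
theorem stmt6 {d : ℕ} {Y P : Type*} [Fintype Y] [Fintype P] [DecidableEq P]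
    [MeasurableSpace Y] [MeasurableSingletonClass Y]
    (η : Y → Y → ℝ) (V : Y → Matrix (Fin d) (Fin d) ℂ)
    (v : P → (Fin d → ℂ)) (c : Y → P → ℂ)
    (hV : ∑ j, (V j)ᴴ * V j = 1)
    (hη_nonneg : ∀ i j, 0 ≤ η i j) (hη_sum : ∀ j, ∑ i, η i j = 1)
    (h_orth : ∀ α β, star (v α) ⬝ᵥ v β = if α = β then 1 else 0)
    (h_complete : ∑ α, proj v α = 1)
    (h_diag : ∀ j, V j = ∑ α, c j α • proj v α)
    (ρ0 : Matrix (Fin d) (Fin d) ℂ) (hρ0 : ρ0.PosSemidef) (hρ0tr : ρ0.trace = 1)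
    (μ : Measure (ℕ → Y)) [IsProbabilityMeasure μ]
    (h_law : ∀ (n : ℕ) (w : Fin n → Y),
      μ (cyl w) = ENNReal.ofReal ((evolve η V ρ0 (List.ofFn w)).trace.re))
    (α : P) :
    Martingale (fun n ω => (proj v α * traj η V ρ0 n ω).trace.re)
      (cylFiltration Y) μ := by
  classical
  set f : ℕ → (ℕ → Y) → ℝ := fun n ω => (proj v α * traj η V ρ0 n ω).trace.re with hfdef
  set g : (n : ℕ) → (Fin n → Y) → ℝ := fun n w =>
    (proj v α * (((evolve η V ρ0 (List.ofFn w)).trace)⁻¹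
      • evolve η V ρ0 (List.ofFn w))).trace.re with hgdef
  have hfg : ∀ n ω, f n ω = g n (fun k : Fin n => ω ↑k) := by
    intro n ω
    simp only [hfdef, hgdef]
    rw [traj_formula η V ρ0 hη_nonneg hρ0 hρ0tr]
  have hπ : ∀ n, Measurable[(cylFiltration Y) n] (fun (ω : ℕ → Y) (k : Fin n) => ω ↑k) :=
    fun n => Measurable.of_comap_le le_rfl
  have hπ0 : ∀ n, Measurable (fun (ω : ℕ → Y) (k : Fin n) => ω ↑k) :=
    fun n => measurable_pi_lambda _ fun k => measurable_pi_apply _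
  have hmeas : ∀ n, StronglyMeasurable[(cylFiltration Y) n] (f n) := by
    intro n
    have h1 : Measurable[(cylFiltration Y) n] fun ω => g n (fun k : Fin n => ω ↑k) :=
      (measurable_of_countable (g n)).comp (hπ n)
    have h2 : f n = fun ω => g n (fun k : Fin n => ω ↑k) := funext (hfg n)
    rw [h2]
    exact h1.stronglyMeasurable
  have hint : ∀ n, Integrable (f n) μ := by
    intro n
    refine Integrable.mono' (integrable_const (∑ w : Fin n → Y, |g n w|))
      ((hmeas n).mono ((cylFiltration Y).le n)).aestronglyMeasurable
      (ae_of_all _ fun ω => ?_)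
    rw [hfg n ω, Real.norm_eq_abs]
    exact Finset.single_le_sum (f := fun w => |g n w|) (fun w _ => abs_nonneg _)
      (Finset.mem_univ _)
  -- The integral of `f n` over the cylinder of a word `w` of length `n`
  have hcylint : ∀ (n : ℕ) (w : Fin n → Y),
      ∫ ω in (fun (ω : ℕ → Y) (k : Fin n) => ω ↑k) ⁻¹' {w}, f n ω ∂μ
        = (proj v α * evolve η V ρ0 (List.ofFn w)).trace.re := by
    intro n w
    have hE : (evolve η V ρ0 (List.ofFn w)).PosSemidef := evolve_psd η V ρ0 hη_nonneg hρ0 _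
    obtain ⟨hT0, hTtr, hTz⟩ := psd_trace_re hE
    obtain ⟨hQ0, hQtr⟩ := trace_proj_re v α hE
    set E := evolve η V ρ0 (List.ofFn w)
    set T := E.trace.re
    set Q := (proj v α * E).trace.re
    have hconst : Set.EqOn (f n) (fun _ => g n w)
        ((fun (ω : ℕ → Y) (k : Fin n) => ω ↑k) ⁻¹' {w}) := by
      intro ω hω
      rw [hfg n ω]
      simp only [Set.mem_preimage, Set.mem_singleton_iff] at hω
      rw [hω]
    rw [setIntegral_congr_fun (hπ0 n (measurableSet_singleton w)) hconst,
      setIntegral_const, ← cyl_eq, measureReal_def, h_law]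
    have hgval : g n w = T⁻¹ * Q := by
      simp only [hgdef]
      rw [Matrix.mul_smul, Matrix.trace_smul, smul_eq_mul, hTtr, hQtr, ← Complex.ofReal_inv,
        ← Complex.ofReal_mul]
      exact Complex.ofReal_re _
    rw [hgval, ENNReal.toReal_ofReal hT0, smul_eq_mul]
    by_cases hT : T = 0
    · have hE0 : E = 0 := hTz hT
      have : Q = 0 := by simp [Q, hE0]
      simp [hT, this]
    · field_simp
  -- Decomposition of a length-`n` cylinder into length-`n+1` cylinders
  have hdec : ∀ (n : ℕ) (w : Fin n → Y),
      (fun (ω : ℕ → Y) (k : Fin n) => ω ↑k) ⁻¹' {w}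
        = ⋃ i ∈ (Finset.univ : Finset Y),
            (fun (ω : ℕ → Y) (k : Fin (n+1)) => ω ↑k) ⁻¹' {Fin.snoc w i} := by
    intro n w
    ext ω
    simp only [Set.mem_preimage, Set.mem_singleton_iff, Set.mem_iUnion, Finset.mem_univ,
      exists_true_left, exists_prop, true_and]
    constructor
    · intro h
      refine ⟨ω n, funext fun k => ?_⟩
      refine Fin.lastCases ?_ (fun j => ?_) k
      · simp
      · simp only [Fin.snoc_castSucc, Fin.coe_castSucc]
        exact congrFun h j
    · rintro ⟨i, hi⟩
      funext k
      have := congrFun hi (Fin.castSucc k)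
      simpa using this
  -- The per-cylinder martingale property
  have hpercyl : ∀ (n : ℕ) (w : Fin n → Y),
      ∫ ω in (fun (ω : ℕ → Y) (k : Fin n) => ω ↑k) ⁻¹' {w}, f (n+1) ω ∂μ
        = ∫ ω in (fun (ω : ℕ → Y) (k : Fin n) => ω ↑k) ⁻¹' {w}, f n ω ∂μ := by
    intro n w
    have hE : (evolve η V ρ0 (List.ofFn w)).PosSemidef := evolve_psd η V ρ0 hη_nonneg hρ0 _
    rw [hcylint n w, hdec n w]
    rw [integral_biUnion_finset Finset.univ
      (fun i _ => hπ0 (n+1) (measurableSet_singleton _))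
      (fun i _ j _ hij => by
        refine Set.disjoint_left.mpr fun ω h1 h2 => hij ?_
        simp only [Set.mem_preimage, Set.mem_singleton_iff] at h1 h2
        have := congrFun (h1.symm.trans h2) (Fin.last n)
        simpa using this)
      (fun i _ => (hint (n+1)).integrableOn)]
    have hterm : ∀ i : Y,
        ∫ ω in (fun (ω : ℕ → Y) (k : Fin (n+1)) => ω ↑k) ⁻¹' {Fin.snoc w i}, f (n+1) ω ∂μ
          = (proj v α * Phi η V i (evolve η V ρ0 (List.ofFn w))).trace.re := by
      intro i
      rw [hcylint (n+1) (Fin.snoc w i), ofFn_snoc, evolve_concat]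
    rw [Finset.sum_congr rfl fun i _ => hterm i]
    have hkey := key_identity η V v c h_orth h_diag hV hη_sum α (evolve η V ρ0 (List.ofFn w))
    have := congrArg Complex.re hkey
    rwa [Complex.re_sum] at this
  -- Conclusion via `martingale_nat`
  refine martingale_nat hmeas hint fun n => ?_
  refine ae_eq_condExp_of_forall_setIntegral_eq ((cylFiltration Y).le n) (hint (n+1))
    (fun s _ _ => (hint n).integrableOn) (fun s hs _ => ?_)
    ((hmeas n).aestronglyMeasurable)
  obtain ⟨t, -, rfl⟩ := hs
  have htdec : (fun (ω : ℕ → Y) (k : Fin n) => ω ↑k) ⁻¹' t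
      = ⋃ w ∈ t.toFinite.toFinset, (fun (ω : ℕ → Y) (k : Fin n) => ω ↑k) ⁻¹' {w} := by
    ext ω
    simp only [Set.mem_preimage, Set.mem_iUnion, Set.Finite.mem_toFinset,
      Set.mem_singleton_iff, exists_prop]
    constructor
    · intro h
      exact ⟨_, h, rfl⟩
    · rintro ⟨w, hw, hww⟩
      rw [hww]
      exact hw
  have hmeaspiece : ∀ w ∈ t.toFinite.toFinset,
      MeasurableSet ((fun (ω : ℕ → Y) (k : Fin n) => ω ↑k) ⁻¹' {w}) :=
    fun w _ => hπ0 n (measurableSet_singleton w)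
  have hdisj : Set.Pairwise ↑t.toFinite.toFinset
      (Function.onFun Disjoint fun w => (fun (ω : ℕ → Y) (k : Fin n) => ω ↑k) ⁻¹' {w}) := by
    intro w _ w' _ hww'
    refine Set.disjoint_left.mpr fun ω h1 h2 => hww' ?_
    simp only [Set.mem_preimage, Set.mem_singleton_iff] at h1 h2
    rw [← h1, ← h2]
  rw [htdec,
    integral_biUnion_finset _ hmeaspiece hdisj (fun w _ => (hint n).integrableOn),
    integral_biUnion_finset _ hmeaspiece hdisj (fun w _ => (hint (n+1)).integrableOn)]
  exact Finset.sum_congr rfl fun w _ => (hpercyl n w).symm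
end

section
/- Non-degeneracy forces mutually exclusive limits: in the QND setting with outcome probabilities $p_n(i) = \sum_\beta q_\beta(n) p(i|\beta)$ and the update $q_\alpha(n+1) = q_\alpha(n) p(i_n|\alpha)/p_n(i_n)$, if $\alpha \ne \beta$ and there exists $i$ with $p(i|\alpha) \ne p(i|\beta)$, then almost surely $q_\alpha(\infty) q_\beta(\infty) = 0$, where $q_\alpha(\infty)$ denotes the almost sure limit of the martingale $q_\alpha(n)$. -/
open MeasureTheory Filter
open scoped BigOperators Topology ENNReal

/-- The pointer-population process of a QND trajectory: probability vectors
evolving by the multiplicative update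
`q_α(n+1) = q_α(n) p(i_n|α) / p_n(i_n)`, `p_n(i) = ∑_β q_β(n) p(i|β)`,
along the outcome sequence `ω`. -/
noncomputable def qdyn {Y P : Type*} [Fintype P]
    (p : Y → P → ℝ) (q0 : P → ℝ) : ℕ → (ℕ → Y) → P → ℝ
  | 0, _, α => q0 α
  | n + 1, ω, α =>
      qdyn p q0 n ω α * p (ω n) α / (∑ β, qdyn p q0 n ω β * p (ω n) β)

lemma qdyn_closed {Y P : Type*} [Fintype P]
    (p : Y → P → ℝ) (q0 : P → ℝ)
    (hp_nonneg : ∀ i β, 0 ≤ p i β)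
    (hq0_nonneg : ∀ β, 0 ≤ q0 β) (hq0_sum : ∑ β, q0 β = 1)
    (n : ℕ) (ω : ℕ → Y) :
    ∀ γ, qdyn p q0 n ω γ
      = q0 γ * (∏ k : Fin n, p (ω (k : ℕ)) γ)
        / (∑ δ, q0 δ * ∏ k : Fin n, p (ω (k : ℕ)) δ) := by
  induction n with
  | zero => intro γ; simp [qdyn, hq0_sum]
  | succ n ih =>
      intro γ
      have hprod : ∀ δ : P, (∏ k : Fin (n+1), p (ω (k : ℕ)) δ)
          = (∏ k : Fin n, p (ω (k : ℕ)) δ) * p (ω n) δ := by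
        intro δ
        rw [Fin.prod_univ_castSucc]
        simp
      set a : P → ℝ := fun δ => q0 δ * ∏ k : Fin n, p (ω (k : ℕ)) δ with ha
      set D : ℝ := ∑ δ, a δ with hD
      have hann : ∀ δ, 0 ≤ a δ := fun δ =>
        mul_nonneg (hq0_nonneg δ) (Finset.prod_nonneg fun k _ => hp_nonneg _ _)
      show qdyn p q0 n ω γ * p (ω n) γ / (∑ b, qdyn p q0 n ω b * p (ω n) b) = _
      have hsum : (∑ b, qdyn p q0 n ω b * p (ω n) b)
          = (∑ b, a b * p (ω n) b) / D := by
        rw [Finset.sum_div]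
        exact Finset.sum_congr rfl fun b _ => by rw [ih b, div_mul_eq_mul_div]
      rw [ih γ, hsum]
      have hgoal : ∀ δ, q0 δ * (∏ k : Fin (n+1), p (ω (k : ℕ)) δ) = a δ * p (ω n) δ := by
        intro δ; rw [hprod δ, ha]; ring
      rw [hgoal γ]
      rw [show (∑ δ, q0 δ * ∏ k : Fin (n+1), p (ω (k : ℕ)) δ) = ∑ δ, a δ * p (ω n) δ from
        Finset.sum_congr rfl fun δ _ => hgoal δ]
      by_cases hD0 : D = 0
      · have haz : ∀ δ, a δ = 0 := fun δ =>
          (Finset.sum_eq_zero_iff_of_nonneg (fun δ _ => hann δ)).mp hD0 δ (Finset.mem_univ δ)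
        have h1 : q0 γ * ∏ k : Fin n, p (ω (k : ℕ)) γ = 0 := haz γ
        have h2 : (∑ b, a b * p (ω n) b) = 0 :=
          Finset.sum_eq_zero fun b _ => by rw [haz b, zero_mul]
        have h3 : a γ = 0 := haz γ
        rw [h1, h2, h3]
        simp
      · by_cases hD' : (∑ δ, a δ * p (ω n) δ) = 0
        · rw [hD']
          simp
        · field_simp
          simp only [ha]; ring

lemma sqrt_prod' {ι : Type*} (s : Finset ι) (f : ι → ℝ) (hf : ∀ i ∈ s, 0 ≤ f i) :
    Real.sqrt (∏ i ∈ s, f i) = ∏ i ∈ s, Real.sqrt (f i) := by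
  induction s using Finset.cons_induction with
  | empty => simp
  | cons i s hi ih =>
      rw [Finset.prod_cons, Finset.prod_cons,
        Real.sqrt_mul (hf i (Finset.mem_cons_self i s)),
        ih fun j hj => hf j (Finset.mem_cons_of_mem hj)]

lemma cyl_lintegral {Y : Type*} [Fintype Y] [MeasurableSpace Y] [MeasurableSingletonClass Y]
    (μ : Measure (ℕ → Y)) (n : ℕ) (f : (Fin n → Y) → ℝ≥0∞) :
    ∫⁻ ω, f (fun k : Fin n => ω (k : ℕ)) ∂μ
      = ∑ w : Fin n → Y, f w * μ {ω | ∀ k : Fin n, ω (k : ℕ) = w k} := by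
  have hg : Measurable fun ω : ℕ → Y => (fun k : Fin n => ω (k : ℕ)) :=
    measurable_pi_lambda _ fun k => measurable_pi_apply _
  have hset : ∀ w : Fin n → Y,
      MeasurableSet {ω : ℕ → Y | (fun k : Fin n => ω (k : ℕ)) = w} :=
    fun w => hg (MeasurableSet.singleton w)
  have key : ∀ ω : ℕ → Y, f (fun k : Fin n => ω (k : ℕ)) =
      ∑ w : Fin n → Y,
        ({ω' : ℕ → Y | (fun k : Fin n => ω' (k : ℕ)) = w}.indicator (fun _ => f w)) ω := by
    intro ω
    rw [Finset.sum_eq_single (fun k : Fin n => ω (k : ℕ))]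
    · rw [Set.indicator_of_mem]; exact rfl
    · intro w _ hw
      apply Set.indicator_of_notMem
      simpa [Set.mem_setOf_eq] using fun h => hw h.symm
    · intro h; exact absurd (Finset.mem_univ _) h
  calc ∫⁻ ω, f (fun k : Fin n => ω (k : ℕ)) ∂μ
      = ∫⁻ ω, ∑ w : Fin n → Y,
          ({ω' : ℕ → Y | (fun k : Fin n => ω' (k : ℕ)) = w}.indicator (fun _ => f w)) ω ∂μ :=
        lintegral_congr key
    _ = ∑ w : Fin n → Y, ∫⁻ ω,
          ({ω' : ℕ → Y | (fun k : Fin n => ω' (k : ℕ)) = w}.indicator (fun _ => f w)) ω ∂μ :=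
        lintegral_finset_sum _ fun w _ => (measurable_const.indicator (hset w))
    _ = ∑ w : Fin n → Y, f w * μ {ω' : ℕ → Y | (fun k : Fin n => ω' (k : ℕ)) = w} := by
        refine Finset.sum_congr rfl fun w _ => ?_
        exact lintegral_indicator_const (hset w) (f w)
    _ = ∑ w : Fin n → Y, f w * μ {ω | ∀ k : Fin n, ω (k : ℕ) = w k} := by
        refine Finset.sum_congr rfl fun w _ => ?_
        have hs : {ω' : ℕ → Y | (fun k : Fin n => ω' (k : ℕ)) = w}
            = {ω | ∀ k : Fin n, ω (k : ℕ) = w k} := Set.ext fun ω => funext_iff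
        rw [hs]

/-- non-degeneracy forces mutually exclusive limits. On the space
of outcome sequences (whose law is determined by the cylinder probabilities
`ℙ(i_0 = w_0, …, i_{n-1} = w_{n-1}) = ∑_β q_β(0) ∏_{k<n} p(w_k|β)`, i.e. the
one built from the transition probabilities `p_n`), if `α ≠ β` and
`p(·|α) ≠ p(·|β)`, then the a.s. martingale limits satisfy
`q_α(∞) q_β(∞) = 0` almost surely. -/
theorem stmt12 {Y P : Type*} [Fintype Y] [Fintype P]
    [MeasurableSpace Y] [MeasurableSingletonClass Y]
    (p : Y → P → ℝ) (q0 : P → ℝ)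
    (hp_nonneg : ∀ i β, 0 ≤ p i β) (hp_sum : ∀ β, ∑ i, p i β = 1)
    (hq0_nonneg : ∀ β, 0 ≤ q0 β) (hq0_sum : ∑ β, q0 β = 1)
    (μ : Measure (ℕ → Y)) [IsProbabilityMeasure μ]
    (h_law : ∀ (n : ℕ) (w : Fin n → Y),
      μ {ω | ∀ k : Fin n, ω (k : ℕ) = w k}
        = ENNReal.ofReal (∑ β, q0 β * ∏ k : Fin n, p (w k) β))
    (qlim : (ℕ → Y) → P → ℝ)
    (h_lim : ∀ᵐ ω ∂μ, ∀ β,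
      Tendsto (fun n => qdyn p q0 n ω β) atTop (𝓝 (qlim ω β)))
    (α β : P) (hαβ : α ≠ β) (h_nondeg : ∃ i, p i α ≠ p i β) :
    ∀ᵐ ω ∂μ, qlim ω α * qlim ω β = 0 := by
  
  classical
  obtain ⟨i0, hi0⟩ := h_nondeg
  set B : ℝ := ∑ i, Real.sqrt (p i α) * Real.sqrt (p i β) with hBdef
  set c : ℝ := Real.sqrt (q0 α) * Real.sqrt (q0 β) with hcdef
  have hB0 : 0 ≤ B :=
    Finset.sum_nonneg fun i _ => mul_nonneg (Real.sqrt_nonneg _) (Real.sqrt_nonneg _)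
  have hB1 : B < 1 := by
    have h1 : (∑ i, (p i α + p i β) / 2) = 1 := by
      rw [← Finset.sum_div, Finset.sum_add_distrib, hp_sum α, hp_sum β]; norm_num
    rw [hBdef, ← h1]
    refine Finset.sum_lt_sum (fun i _ => ?_) ⟨i0, Finset.mem_univ i0, ?_⟩
    · nlinarith [sq_nonneg (Real.sqrt (p i α) - Real.sqrt (p i β)),
        Real.sq_sqrt (hp_nonneg i α), Real.sq_sqrt (hp_nonneg i β)]
    · have hne : Real.sqrt (p i0 α) ≠ Real.sqrt (p i0 β) := by
        intro h
        exact hi0 (by rw [← Real.sq_sqrt (hp_nonneg i0 α), h, Real.sq_sqrt (hp_nonneg i0 β)])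
      have hpos := mul_self_pos.mpr (sub_ne_zero.mpr hne)
      nlinarith [Real.sq_sqrt (hp_nonneg i0 α), Real.sq_sqrt (hp_nonneg i0 β)]
  have hqc := qdyn_closed p q0 hp_nonneg hq0_nonneg hq0_sum
  have hq_nonneg : ∀ n (ω : ℕ → Y) γ, 0 ≤ qdyn p q0 n ω γ := by
    intro n ω γ
    rw [hqc n ω γ]
    exact div_nonneg
      (mul_nonneg (hq0_nonneg γ) (Finset.prod_nonneg fun k _ => hp_nonneg _ _))
      (Finset.sum_nonneg fun δ _ =>
        mul_nonneg (hq0_nonneg δ) (Finset.prod_nonneg fun k _ => hp_nonneg _ _))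
  have hmeasq : ∀ n, ∀ γ, Measurable fun ω : ℕ → Y => qdyn p q0 n ω γ := by
    intro n
    induction n with
    | zero => intro γ; exact measurable_const
    | succ n ih =>
        intro γ
        have hp' : ∀ δ, Measurable fun ω : ℕ → Y => p (ω n) δ := fun δ =>
          (measurable_of_countable (fun y => p y δ)).comp (measurable_pi_apply n)
        exact ((ih γ).mul (hp' γ)).div
          (Finset.measurable_sum _ fun δ _ => (ih δ).mul (hp' δ))
  set F : ℕ → (ℕ → Y) → ℝ≥0∞ := fun n ω =>
    ENNReal.ofReal (Real.sqrt (qdyn p q0 n ω α * qdyn p q0 n ω β)) with hF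
  have hmeasF : ∀ n, Measurable (F n) := fun n =>
    ENNReal.measurable_ofReal.comp (Real.continuous_sqrt.measurable.comp ((hmeasq n α).mul (hmeasq n β)))
  have hE : ∀ n, ∫⁻ ω, F n ω ∂μ = ENNReal.ofReal (c * B ^ n) := by
    intro n
    set f : (Fin n → Y) → ℝ≥0∞ := fun w => ENNReal.ofReal (Real.sqrt
      ((q0 α * ∏ k : Fin n, p (w k) α) / (∑ δ, q0 δ * ∏ k : Fin n, p (w k) δ)
        * ((q0 β * ∏ k : Fin n, p (w k) β) / (∑ δ, q0 δ * ∏ k : Fin n, p (w k) δ)))) with hf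
    have h1 : ∀ ω : ℕ → Y, F n ω = f (fun k : Fin n => ω (k : ℕ)) := by
      intro ω
      simp only [hF, hqc n ω, hf]
    calc ∫⁻ ω, F n ω ∂μ
        = ∫⁻ ω, f (fun k : Fin n => ω (k : ℕ)) ∂μ := lintegral_congr h1
      _ = ∑ w : Fin n → Y, f w * μ {ω | ∀ k : Fin n, ω (k : ℕ) = w k} := cyl_lintegral μ n f
      _ = ∑ w : Fin n → Y, ENNReal.ofReal
            ((Real.sqrt (q0 α) * ∏ k : Fin n, Real.sqrt (p (w k) α))
              * (Real.sqrt (q0 β) * ∏ k : Fin n, Real.sqrt (p (w k) β))) := by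
          refine Finset.sum_congr rfl fun w _ => ?_
          rw [h_law n w, hf]
          set a := q0 α * ∏ k : Fin n, p (w k) α with ha2
          set b := q0 β * ∏ k : Fin n, p (w k) β with hb2
          set d := ∑ δ, q0 δ * ∏ k : Fin n, p (w k) δ with hd2
          have hannn : ∀ δ, 0 ≤ q0 δ * ∏ k : Fin n, p (w k) δ := fun δ =>
            mul_nonneg (hq0_nonneg δ) (Finset.prod_nonneg fun k _ => hp_nonneg _ _)
          have hav : 0 ≤ a := hannn α
          have hbv : 0 ≤ b := hannn β
          have hdv : 0 ≤ d := Finset.sum_nonneg fun δ _ => hannn δ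
          have had : a ≤ d := Finset.single_le_sum (fun δ _ => hannn δ) (Finset.mem_univ α)
          have key : Real.sqrt (a / d * (b / d)) * d = Real.sqrt a * Real.sqrt b := by
            by_cases hd0 : d = 0
            · have ha0 : a = 0 := le_antisymm (hd0 ▸ had) hav
              rw [hd0, ha0]; simp
            · rw [div_mul_div_comm, Real.sqrt_div (mul_nonneg hav hbv),
                Real.sqrt_mul_self hdv, Real.sqrt_mul hav, div_mul_cancel₀ _ hd0]
          have hsa : Real.sqrt a
              = Real.sqrt (q0 α) * ∏ k : Fin n, Real.sqrt (p (w k) α) := by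
            rw [ha2, Real.sqrt_mul (hq0_nonneg α), sqrt_prod' _ _ (fun k _ => hp_nonneg _ _)]
          have hsb : Real.sqrt b
              = Real.sqrt (q0 β) * ∏ k : Fin n, Real.sqrt (p (w k) β) := by
            rw [hb2, Real.sqrt_mul (hq0_nonneg β), sqrt_prod' _ _ (fun k _ => hp_nonneg _ _)]
          rw [← ENNReal.ofReal_mul (Real.sqrt_nonneg _), key, hsa, hsb]
      _ = ENNReal.ofReal (∑ w : Fin n → Y,
            (Real.sqrt (q0 α) * ∏ k : Fin n, Real.sqrt (p (w k) α))
              * (Real.sqrt (q0 β) * ∏ k : Fin n, Real.sqrt (p (w k) β))) := by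
          rw [ENNReal.ofReal_sum_of_nonneg]
          intro w _
          exact mul_nonneg
            (mul_nonneg (Real.sqrt_nonneg _) (Finset.prod_nonneg fun k _ => Real.sqrt_nonneg _))
            (mul_nonneg (Real.sqrt_nonneg _) (Finset.prod_nonneg fun k _ => Real.sqrt_nonneg _))
      _ = ENNReal.ofReal (c * B ^ n) := by
          congr 1
          have hrw : ∀ w : Fin n → Y,
              (Real.sqrt (q0 α) * ∏ k : Fin n, Real.sqrt (p (w k) α))
                * (Real.sqrt (q0 β) * ∏ k : Fin n, Real.sqrt (p (w k) β))
              = c * ∏ k : Fin n, (Real.sqrt (p (w k) α) * Real.sqrt (p (w k) β)) := by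
            intro w
            rw [hcdef, Finset.prod_mul_distrib]
            ring
          rw [Finset.sum_congr rfl fun w _ => hrw w, ← Finset.mul_sum]
          congr 1
          have hps := Finset.prod_univ_sum (fun _ : Fin n => (Finset.univ : Finset Y))
            (fun _ y => Real.sqrt (p y α) * Real.sqrt (p y β))
          rw [Fintype.piFinset_univ] at hps
          rw [← hps, hBdef, Finset.prod_const]
          simp
  have hEtend : Tendsto (fun n => ∫⁻ ω, F n ω ∂μ) atTop (𝓝 0) := by
    simp only [hE]
    have h2 : Tendsto (fun n : ℕ => c * B ^ n) atTop (𝓝 0) := by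
      simpa using (tendsto_pow_atTop_nhds_zero_of_lt_one hB0 hB1).const_mul c
    have h3 := (ENNReal.continuous_ofReal.tendsto 0).comp h2
    simpa [Function.comp_def] using h3
  have hliminf_meas : Measurable fun ω => liminf (fun n => F n ω) atTop :=
    Measurable.liminf hmeasF
  have hfatou : ∫⁻ ω, liminf (fun n => F n ω) atTop ∂μ = 0 := by
    refine le_antisymm ?_ zero_le
    have h4 := lintegral_liminf_le hmeasF (μ := μ) (u := atTop)
    rwa [hEtend.liminf_eq] at h4
  have hzero := (lintegral_eq_zero_iff hliminf_meas).mp hfatou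
  filter_upwards [h_lim, hzero] with ω hω hz
  have ht : Tendsto (fun n => qdyn p q0 n ω α * qdyn p q0 n ω β) atTop
      (𝓝 (qlim ω α * qlim ω β)) := (hω α).mul (hω β)
  have ht2 : Tendsto (fun n => Real.sqrt (qdyn p q0 n ω α * qdyn p q0 n ω β)) atTop
      (𝓝 (Real.sqrt (qlim ω α * qlim ω β))) := (Real.continuous_sqrt.tendsto _).comp ht
  have ht3 : Tendsto (fun n => F n ω) atTop
      (𝓝 (ENNReal.ofReal (Real.sqrt (qlim ω α * qlim ω β)))) :=
    (ENNReal.continuous_ofReal.tendsto _).comp ht2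
  have h4 : ENNReal.ofReal (Real.sqrt (qlim ω α * qlim ω β)) = 0 := by
    rw [← ht3.liminf_eq]
    simpa using hz
  have h5 : qlim ω α * qlim ω β ≤ 0 :=
    Real.sqrt_eq_zero'.mp
      (le_antisymm (ENNReal.ofReal_eq_zero.mp h4) (Real.sqrt_nonneg _))
  have h6 : 0 ≤ qlim ω α * qlim ω β :=
    ge_of_tendsto' ht fun n => mul_nonneg (hq_nonneg n ω α) (hq_nonneg n ω β)
  linarith
end

section
/- Parameter-misspecified exponential rate: if the estimated filter uses Kraus maps $\Phi_i^{\hat\theta}$ with conditional probabilities $p^{\hat\theta}(i|\alpha)$ while the true outcomes are i.i.d. with law $p(\cdot|\Upsilon)$ conditionally on $\Upsilon$, then for any $\alpha$ with $\hat q_\alpha^{\hat\theta}(0) \ne 0$, almost surely $\frac{1}{n}\ln\big(\hat q_\alpha^{\hat\theta}(n)/\hat q_\Upsilon^{\hat\theta}(n)\big) \to S(\mathbb{P}_\Upsilon\|\mathbb{P}_\Upsilon^{\hat\theta}) - S(\mathbb{P}_\Upsilon\|\mathbb{P}_\alpha^{\hat\theta})$, where $S(\mathbb{P}_\gamma\|\mathbb{P}_\beta^{\hat\theta})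 = \sum_i p(i|\gamma)\ln(p(i|\gamma)/p^{\hat\theta}(i|\beta))$. -/
open MeasureTheory ProbabilityTheory Filter
open scoped BigOperators Topology ENNReal

section det

variable {Y P : Type*} [Fintype P] (phat : Y → P → ℝ) (q0 : P → ℝ) (ω : ℕ → Y)

lemma qdyn_nonneg (hq0 : ∀ β, 0 ≤ q0 β) (hphat : ∀ i β, 0 ≤ phat i β) :
    ∀ n β, 0 ≤ qdyn phat q0 n ω β := by
  intro n
  induction n with
  | zero => exact hq0
  | succ n ih =>
      intro β
      exact div_nonneg (mul_nonneg (ih β) (hphat _ _))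
        (Finset.sum_nonneg fun β' _ => mul_nonneg (ih β') (hphat _ _))

lemma qdyn_pos (hq0 : ∀ β, 0 ≤ q0 β) (hphat : ∀ i β, 0 ≤ phat i β)
    (hpos : ∀ k β, 0 < phat (ω k) β) {β : P} (hβ : 0 < q0 β) :
    ∀ n, 0 < qdyn phat q0 n ω β := by
  intro n
  induction n with
  | zero => exact hβ
  | succ n ih =>
      refine div_pos (mul_pos ih (hpos n β)) ?_
      refine Finset.sum_pos' (fun β' _ => mul_nonneg (qdyn_nonneg phat q0 ω hq0 hphat n β') (hphat _ _)) ?_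
      exact ⟨β, Finset.mem_univ β, mul_pos ih (hpos n β)⟩

lemma qdyn_ratio (hq0 : ∀ β, 0 ≤ q0 β) (hphat : ∀ i β, 0 ≤ phat i β)
    (hpos : ∀ k β, 0 < phat (ω k) β) {α γ : P} (hα : 0 < q0 α) (hγ : 0 < q0 γ) :
    ∀ n, qdyn phat q0 n ω α / qdyn phat q0 n ω γ
      = (q0 α / q0 γ) * ∏ k ∈ Finset.range n, (phat (ω k) α / phat (ω k) γ) := by
  intro n
  induction n with
  | zero => simp [qdyn]
  | succ n ih =>
      have hqα := qdyn_pos phat q0 ω hq0 hphat hpos hα n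
      have hqγ := qdyn_pos phat q0 ω hq0 hphat hpos hγ n
      have hD : 0 < ∑ β, qdyn phat q0 n ω β * phat (ω n) β := by
        refine Finset.sum_pos' (fun β' _ => mul_nonneg (qdyn_nonneg phat q0 ω hq0 hphat n β') (hphat _ _)) ?_
        exact ⟨α, Finset.mem_univ α, mul_pos hqα (hpos n α)⟩
      rw [Finset.prod_range_succ, ← mul_assoc, ← ih]
      show qdyn phat q0 n ω α * phat (ω n) α / (∑ β, qdyn phat q0 n ω β * phat (ω n) β)
          / (qdyn phat q0 n ω γ * phat (ω n) γ / (∑ β, qdyn phat q0 n ω β * phat (ω n) β))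
        = qdyn phat q0 n ω α / qdyn phat q0 n ω γ * (phat (ω n) α / phat (ω n) γ)
      have h1 : (∑ β, qdyn phat q0 n ω β * phat (ω n) β) ≠ 0 := ne_of_gt hD
      have h2 : qdyn phat q0 n ω γ ≠ 0 := ne_of_gt hqγ
      have h3 : phat (ω n) γ ≠ 0 := ne_of_gt (hpos n γ)
      field_simp

end det

lemma tendsto_log_aux (c : ℝ) (hc : 0 < c) (g : ℕ → ℝ) (hg : ∀ k, 0 < g k) (m : ℝ)
    (h : Tendsto (fun n : ℕ => (∑ k ∈ Finset.range n, Real.log (g k)) / n) atTop (𝓝 m)) :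
    Tendsto (fun n : ℕ => (1 / (n : ℝ)) * Real.log (c * ∏ k ∈ Finset.range n, g k)) atTop (𝓝 m) := by
  have hprod : ∀ n : ℕ, Real.log (c * ∏ k ∈ Finset.range n, g k)
      = Real.log c + ∑ k ∈ Finset.range n, Real.log (g k) := by
    intro n
    rw [Real.log_mul (ne_of_gt hc) (ne_of_gt (Finset.prod_pos fun k _ => hg k)),
      Real.log_prod (fun k _ => ne_of_gt (hg k))]
  have h1 : Tendsto (fun n : ℕ => Real.log c / n) atTop (𝓝 0) :=
    tendsto_const_div_atTop_nhds_zero_nat _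
  have h2 := h1.add h
  rw [zero_add] at h2
  refine h2.congr fun n => ?_
  rw [hprod n]
  ring

lemma sum_identity {Y : Type*} [Fintype Y] (pγ phatγ phatα : Y → ℝ) (hpγ : ∀ a, 0 ≤ pγ a)
    (hγpos : ∀ a, 0 < pγ a → 0 < phatγ a) (hαpos : ∀ a, 0 < pγ a → 0 < phatα a) :
    ∑ a, pγ a * (Real.log (phatα a) - Real.log (phatγ a))
      = (∑ a, pγ a * Real.log (pγ a / phatγ a)) - ∑ a, pγ a * Real.log (pγ a / phatα a) := by
  rw [← Finset.sum_sub_distrib]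
  refine Finset.sum_congr rfl fun a _ => ?_
  rcases eq_or_lt_of_le (hpγ a) with h | h
  · simp [← h]
  · rw [Real.log_div (ne_of_gt h) (ne_of_gt (hγpos a h)),
      Real.log_div (ne_of_gt h) (ne_of_gt (hαpos a h))]
    ring



section pm

variable {Y : Type*} [Fintype Y] [MeasurableSpace Y] [MeasurableSingletonClass Y]

/-- The measure on `Y` with weights `f`. -/
noncomputable def pm (f : Y → ℝ) : Measure Y :=
  Measure.sum (fun a => ENNReal.ofReal (f a) • Measure.dirac a)

lemma pm_apply_singleton (f : Y → ℝ) (a : Y) : pm f {a} = ENNReal.ofReal (f a) := by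
  rw [pm, Measure.sum_apply _ (measurableSet_singleton a)]
  rw [tsum_eq_single a ?_]
  · simp
  · intro b hb
    simp only [Measure.smul_apply, smul_eq_mul]
    rw [Measure.dirac_apply' _ (measurableSet_singleton a),
      Set.indicator_of_notMem (by simpa using hb)]
    simp

lemma pm_null (f : Y → ℝ) (s : Set Y) (hs : ∀ a ∈ s, f a = 0) : pm f s = 0 := by
  have hsm : MeasurableSet s := (Set.to_countable s).measurableSet
  rw [pm, Measure.sum_apply _ hsm]
  refine ENNReal.tsum_eq_zero.mpr fun a => ?_
  simp only [Measure.smul_apply, smul_eq_mul]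
  by_cases ha : a ∈ s
  · rw [hs a ha]; simp
  · rw [Measure.dirac_apply' _ hsm, Set.indicator_of_notMem ha]; simp

lemma pm_prob (f : Y → ℝ) (hf : ∀ a, 0 ≤ f a) (hf1 : ∑ a, f a = 1) :
    IsProbabilityMeasure (pm f) := by
  constructor
  rw [pm, Measure.sum_apply _ MeasurableSet.univ]
  simp only [Measure.smul_apply, Measure.dirac_apply' _ MeasurableSet.univ, smul_eq_mul]
  simp only [Set.indicator_univ, Pi.one_apply, mul_one]
  rw [tsum_fintype, ← ENNReal.ofReal_sum_of_nonneg (fun a _ => hf a), hf1, ENNReal.ofReal_one]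

lemma pi_map_eval (f : Y → ℝ) (hf : ∀ a, 0 ≤ f a) (hf1 : ∑ a, f a = 1)
    {n : ℕ} (i : Fin n) :
    (Measure.pi (fun _ : Fin n => pm f)).map (fun w => w i) = pm f := by
  haveI := pm_prob f hf hf1
  refine Measure.ext_of_singleton fun a => ?_
  rw [Measure.map_apply (measurable_pi_apply i) (measurableSet_singleton a)]
  have hpre : (fun w : Fin n → Y => w i) ⁻¹' {a}
      = Set.univ.pi (fun k => if k = i then {a} else Set.univ) := by
    ext w
    simp only [Set.mem_preimage, Set.mem_singleton_iff, Set.mem_pi, Set.mem_univ, true_implies]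
    constructor
    · intro h k
      by_cases hk : k = i <;> simp [hk, h]
    · intro h
      simpa using h i
  rw [hpre, Measure.pi_pi]
  rw [Finset.prod_eq_single i (fun b _ hb => by simp [hb]) (by simp)]
  simp [pm_apply_singleton]

lemma pi_map_eval_pair (f : Y → ℝ) (hf : ∀ a, 0 ≤ f a) (hf1 : ∑ a, f a = 1)
    {n : ℕ} (i j : Fin n) (hij : i ≠ j) :
    (Measure.pi (fun _ : Fin n => pm f)).map (fun w => (w i, w j)) = (pm f).prod (pm f) := by
  classical
  haveI := pm_prob f hf hf1
  refine Measure.ext_of_singleton fun ab => ?_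
  obtain ⟨a, b⟩ := ab
  rw [Measure.map_apply ((measurable_pi_apply i).prodMk (measurable_pi_apply j))
    (measurableSet_singleton _)]
  have hpre : (fun w : Fin n → Y => (w i, w j)) ⁻¹' {(a, b)}
      = Set.univ.pi (fun k => if k = i then {a} else if k = j then {b} else Set.univ) := by
    ext w
    simp only [Set.mem_preimage, Set.mem_singleton_iff, Prod.mk.injEq, Set.mem_pi,
      Set.mem_univ, true_implies]
    constructor
    · rintro ⟨h1, h2⟩ k
      by_cases hk : k = i
      · simp [hk, h1]
      · by_cases hk' : k = j <;> simp [hk, hk', h2, hij.symm]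
    · intro h
      refine ⟨by simpa [hij] using h i, ?_⟩
      have := h j
      simp only [if_neg hij.symm, if_pos rfl] at this
      simpa using this
  rw [hpre, Measure.pi_pi]
  have hsub : (∏ k : Fin n, pm f (if k = i then {a} else if k = j then {b} else Set.univ))
      = ∏ k ∈ ({i, j} : Finset (Fin n)), pm f (if k = i then {a} else if k = j then {b} else Set.univ) := by
    refine (Finset.prod_subset (Finset.subset_univ _) fun k _ hk => ?_).symm
    simp only [Finset.mem_insert, Finset.mem_singleton, not_or] at hk
    rw [if_neg hk.1, if_neg hk.2]
    exact measure_univ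
  rw [hsub, Finset.prod_pair hij]
  rw [if_pos rfl, if_neg hij.symm, if_pos rfl]
  have : ({(a, b)} : Set (Y × Y)) = {a} ×ˢ {b} := by simp
  rw [this, Measure.prod_prod, pm_apply_singleton, pm_apply_singleton]

lemma measurable_pre {Y : Type*} [MeasurableSpace Y] (n : ℕ) :
    Measurable (fun (ω : ℕ → Y) (k : Fin n) => ω (k : ℕ)) :=
  measurable_pi_lambda _ fun k => measurable_pi_apply _

lemma map_pre_eq_pi (ν : Measure (ℕ → Y)) (f : Y → ℝ) (hf : ∀ a, 0 ≤ f a) (hf1 : ∑ a, f a = 1)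
    (hcyl : ∀ (n : ℕ) (w : Fin n → Y), ν (cyl w) = ENNReal.ofReal (∏ k : Fin n, f (w k)))
    (n : ℕ) :
    ν.map (fun ω (k : Fin n) => ω (k : ℕ)) = Measure.pi (fun _ : Fin n => pm f) := by
  haveI := pm_prob f hf hf1
  refine Measure.ext_of_singleton fun w => ?_
  rw [Measure.map_apply (measurable_pre n) (measurableSet_singleton w)]
  have h1 : (fun (ω : ℕ → Y) (k : Fin n) => ω (k : ℕ)) ⁻¹' {w} = cyl w := by
    ext ω
    simp [cyl, funext_iff]
  have h2 : ({w} : Set (Fin n → Y)) = Set.univ.pi (fun k => {w k}) := by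
    ext v
    simp [funext_iff]
  rw [h1, hcyl, h2, Measure.pi_pi]
  simp only [pm_apply_singleton]
  rw [← ENNReal.ofReal_prod_of_nonneg (fun k _ => hf (w k))]

lemma cond_map_eval (ν : Measure (ℕ → Y)) (f : Y → ℝ) (hf : ∀ a, 0 ≤ f a) (hf1 : ∑ a, f a = 1)
    (hcyl : ∀ (n : ℕ) (w : Fin n → Y), ν (cyl w) = ENNReal.ofReal (∏ k : Fin n, f (w k)))
    (i : ℕ) :
    ν.map (fun ω => ω i) = pm f := by
  have hcomp : (fun ω : ℕ → Y => ω i)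
      = (fun w : Fin (i + 1) → Y => w ⟨i, Nat.lt_succ_self i⟩)
        ∘ (fun ω (k : Fin (i + 1)) => ω (k : ℕ)) := rfl
  rw [hcomp, ← Measure.map_map (measurable_pi_apply _) (measurable_pre _),
    map_pre_eq_pi ν f hf hf1 hcyl, pi_map_eval f hf hf1]

lemma cond_map_pair (ν : Measure (ℕ → Y)) (f : Y → ℝ) (hf : ∀ a, 0 ≤ f a) (hf1 : ∑ a, f a = 1)
    (hcyl : ∀ (n : ℕ) (w : Fin n → Y), ν (cyl w) = ENNReal.ofReal (∏ k : Fin n, f (w k)))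
    (i j : ℕ) (hij : i ≠ j) :
    ν.map (fun ω => (ω i, ω j)) = (pm f).prod (pm f) := by
  set n := max i j + 1 with hn
  have hi : i < n := Nat.lt_succ_of_le (le_max_left i j)
  have hj : j < n := Nat.lt_succ_of_le (le_max_right i j)
  have hcomp : (fun ω : ℕ → Y => (ω i, ω j))
      = (fun w : Fin n → Y => (w ⟨i, hi⟩, w ⟨j, hj⟩)) ∘ (fun ω (k : Fin n) => ω (k : ℕ)) := rfl
  rw [hcomp, ← Measure.map_map ((measurable_pi_apply _).prodMk (measurable_pi_apply _))
    (measurable_pre _), map_pre_eq_pi ν f hf hf1 hcyl,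
    pi_map_eval_pair f hf hf1 _ _ (by simpa [Fin.ext_iff] using hij)]

end pm

/-- parameter-misspecified exponential rate. If the estimated QND
filter uses outcome probabilities `p̂(i|α) = p^θ̂(i|α)` while, conditionally on
the selected pointer state `Υ = γ`, the true outcomes are i.i.d. with law
`p(·|γ)`, then for any `α` with `q̂_α(0) ≠ 0`, almost surely
`(1/n) ln(q̂^θ̂_α(n)/q̂^θ̂_Υ(n)) → S(ℙ_Υ‖ℙ^θ̂_Υ) - S(ℙ_Υ‖ℙ^θ̂_α)`. -/
theorem stmt18 {Y P : Type*} [Fintype Y] [Fintype P]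
    [MeasurableSpace Y] [MeasurableSingletonClass Y]
    [MeasurableSpace P] [MeasurableSingletonClass P]
    (p phat : Y → P → ℝ)
    (hp_nonneg : ∀ i β, 0 ≤ p i β) (hp_sum : ∀ β, ∑ i, p i β = 1)
    (hphat_nonneg : ∀ i β, 0 ≤ phat i β) (hphat_sum : ∀ β, ∑ i, phat i β = 1)
    (h_pos : ∀ i γ β, 0 < p i γ → 0 < phat i β)
    (q0 : P → ℝ) (hq0_nonneg : ∀ γ, 0 ≤ q0 γ) (hq0_sum : ∑ γ, q0 γ = 1)
    (μ : Measure (ℕ → Y)) [IsProbabilityMeasure μ]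
    (Υ : (ℕ → Y) → P) (hΥ_meas : Measurable Υ)
    (hΥ_law : ∀ γ, μ {ω | Υ ω = γ} = ENNReal.ofReal (q0 γ))
    -- conditionally on `{Υ = γ}` the outcomes are i.i.d. with law `p(·|γ)`:
    (h_iid : ∀ γ, 0 < q0 γ → ∀ (n : ℕ) (w : Fin n → Y),
      μ[|{ω | Υ ω = γ}] (cyl w) = ENNReal.ofReal (∏ k : Fin n, p (w k) γ))
    -- the estimated filter's initial pointer populations:
    (qhat0 : P → ℝ) (hqhat0_nonneg : ∀ β, 0 ≤ qhat0 β) (hqhat0_sum : ∑ β, qhat0 β = 1)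
    (hqhat0_sel : ∀ γ, 0 < q0 γ → qhat0 γ ≠ 0)
    (α : P) (hα : qhat0 α ≠ 0) :
    ∀ᵐ ω ∂μ,
      Tendsto (fun n : ℕ => (1 / (n : ℝ)) *
          Real.log (qdyn phat qhat0 n ω α / qdyn phat qhat0 n ω (Υ ω)))
        atTop
        (𝓝 ((∑ i, p i (Υ ω) * Real.log (p i (Υ ω) / phat i (Υ ω)))
          - ∑ i, p i (Υ ω) * Real.log (p i (Υ ω) / phat i α))) := by
  classical
  set Q : (ℕ → Y) → Prop := fun ω =>
    Tendsto (fun n : ℕ => (1 / (n : ℝ)) *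
        Real.log (qdyn phat qhat0 n ω α / qdyn phat qhat0 n ω (Υ ω))) atTop
      (𝓝 ((∑ i, p i (Υ ω) * Real.log (p i (Υ ω) / phat i (Υ ω)))
        - ∑ i, p i (Υ ω) * Real.log (p i (Υ ω) / phat i α))) with hQ
  show ∀ᵐ ω ∂μ, Q ω
  have key : ∀ γ : P, μ ({ω | Υ ω = γ} ∩ {ω | ¬ Q ω}) = 0 := by
    intro γ
    by_cases hγpos : 0 < q0 γ
    · set A : Set (ℕ → Y) := {ω | Υ ω = γ} with hA
      have hA_meas : MeasurableSet A := hΥ_meas (measurableSet_singleton γ)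
      have hμA : μ A = ENNReal.ofReal (q0 γ) := hΥ_law γ
      have hμA0 : μ A ≠ 0 := by
        rw [hμA]
        simpa [ENNReal.ofReal_eq_zero, not_le] using hγpos
      haveI : IsProbabilityMeasure (μ[|A]) := cond_isProbabilityMeasure hμA0
      set ν := μ[|A] with hν
      have hcyl : ∀ (n : ℕ) (w : Fin n → Y),
          ν (cyl w) = ENNReal.ofReal (∏ k : Fin n, p (w k) γ) := h_iid γ hγpos
      have hpnn : ∀ a, 0 ≤ p a γ := fun a => hp_nonneg a γ
      have hpsum : ∑ a, p a γ = 1 := hp_sum γ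
      have law_eval : ∀ i : ℕ, ν.map (fun ω => ω i) = pm (fun a => p a γ) :=
        fun i => cond_map_eval ν _ hpnn hpsum hcyl i
      set f : Y → ℝ := fun a => Real.log (phat a α) - Real.log (phat a γ) with hf
      have hf_meas : Measurable f := measurable_of_countable f
      set X : ℕ → (ℕ → Y) → ℝ := fun k ω => f (ω k) with hX
      have hXmeas : ∀ k, Measurable (X k) := fun k => hf_meas.comp (measurable_pi_apply k)
      have hident : ∀ k, IdentDistrib (X k) (X 0) ν ν := by
        intro k
        refine ⟨(hXmeas k).aemeasurable, (hXmeas 0).aemeasurable, ?_⟩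
        have h1 : ν.map (X k) = (ν.map (fun ω => ω k)).map f :=
          (Measure.map_map hf_meas (measurable_pi_apply k)).symm
        have h2 : ν.map (X 0) = (ν.map (fun ω => ω 0)).map f :=
          (Measure.map_map hf_meas (measurable_pi_apply 0)).symm
        rw [h1, h2, law_eval k, law_eval 0]
      have hindep : Pairwise (Function.onFun (IndepFun · · ν) X) := by
        intro i j hij
        have hev : IndepFun (fun ω : ℕ → Y => ω i) (fun ω : ℕ → Y => ω j) ν := by
          rw [indepFun_iff_map_prod_eq_prod_map_map (measurable_pi_apply i).aemeasurable
            (measurable_pi_apply j).aemeasurable, law_eval i, law_eval j]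
          exact cond_map_pair ν _ hpnn hpsum hcyl i j hij
        exact hev.comp hf_meas hf_meas
      have hint : Integrable (X 0) ν := by
        refine (integrable_const (∑ a, |f a|)).mono' (hXmeas 0).aestronglyMeasurable
          (ae_of_all _ fun ω => ?_)
        rw [Real.norm_eq_abs]
        exact Finset.single_le_sum (f := fun a => |f a|) (fun a _ => abs_nonneg _)
          (Finset.mem_univ (ω 0))
      have hslln := strong_law_ae_real X hint hindep hident
      have hintegral : (∫ ω, X 0 ω ∂ν) = ∑ a, p a γ * f a := by
        have hint_pm : Integrable f (pm (fun a => p a γ)) := by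
          haveI := pm_prob (fun a => p a γ) hpnn hpsum
          exact Integrable.of_finite
        have h1 : (∫ ω, X 0 ω ∂ν) = ∫ a, f a ∂(ν.map (fun ω => ω 0)) := by
          rw [integral_map (measurable_pi_apply 0).aemeasurable
            (by rw [law_eval 0]; exact hf_meas.aestronglyMeasurable)]
        rw [h1, law_eval 0, integral_fintype hint_pm]
        refine Finset.sum_congr rfl fun a _ => ?_
        rw [measureReal_def, pm_apply_singleton, ENNReal.toReal_ofReal (hpnn a), smul_eq_mul]
      rw [hintegral] at hslln
      have hposae : ∀ᵐ ω ∂ν, ∀ k : ℕ, 0 < p (ω k) γ := by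
        rw [ae_all_iff]
        intro k
        have hset : {ω : ℕ → Y | ¬ 0 < p (ω k) γ}
            = (fun ω : ℕ → Y => ω k) ⁻¹' {a | ¬ 0 < p a γ} := rfl
        rw [ae_iff, hset, ← Measure.map_apply (measurable_pi_apply k)
          ((Set.to_countable _).measurableSet), law_eval k]
        exact pm_null _ _ (fun a ha => le_antisymm (not_lt.mp ha) (hpnn a))
      have hΥae : ∀ᵐ ω ∂ν, Υ ω = γ := by
        rw [ae_iff]
        have hset : {ω | ¬ Υ ω = γ} = Aᶜ := rfl
        rw [hset, hν, cond_apply hA_meas]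
        simp
      have hQae : ∀ᵐ ω ∂ν, Q ω := by
        filter_upwards [hposae, hΥae, hslln] with ω hpos hΥω hsl
        have hphat_pos : ∀ k β, 0 < phat (ω k) β := fun k β => h_pos (ω k) γ β (hpos k)
        have hα' : 0 < qhat0 α := lt_of_le_of_ne (hqhat0_nonneg α) (Ne.symm hα)
        have hγ' : 0 < qhat0 γ :=
          lt_of_le_of_ne (hqhat0_nonneg γ) (Ne.symm (hqhat0_sel γ hγpos))
        show Tendsto (fun n : ℕ => (1 / (n : ℝ)) *
            Real.log (qdyn phat qhat0 n ω α / qdyn phat qhat0 n ω (Υ ω))) atTop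
          (𝓝 ((∑ i, p i (Υ ω) * Real.log (p i (Υ ω) / phat i (Υ ω)))
            - ∑ i, p i (Υ ω) * Real.log (p i (Υ ω) / phat i α)))
        rw [hΥω]
        have hsum_eq : (∑ i, p i γ * Real.log (p i γ / phat i γ))
            - (∑ i, p i γ * Real.log (p i γ / phat i α)) = ∑ a, p a γ * f a :=
          (sum_identity (fun a => p a γ) (fun a => phat a γ) (fun a => phat a α) hpnn
            (fun a ha => h_pos a γ γ ha) (fun a ha => h_pos a γ α ha)).symm
        rw [hsum_eq]
        have hsl' : Tendsto (fun n : ℕ =>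
            (∑ k ∈ Finset.range n, Real.log (phat (ω k) α / phat (ω k) γ)) / n) atTop
            (𝓝 (∑ a, p a γ * f a)) := by
          refine hsl.congr fun n => ?_
          congr 1
          refine Finset.sum_congr rfl fun k _ => ?_
          rw [Real.log_div (ne_of_gt (hphat_pos k α)) (ne_of_gt (hphat_pos k γ))]
        have hfin := tendsto_log_aux (qhat0 α / qhat0 γ) (div_pos hα' hγ')
          (fun k => phat (ω k) α / phat (ω k) γ)
          (fun k => div_pos (hphat_pos k α) (hphat_pos k γ)) _ hsl'
        refine hfin.congr fun n => ?_
        rw [qdyn_ratio phat qhat0 ω hqhat0_nonneg hphat_nonneg hphat_pos hα' hγ' n]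
      have h0 : ν {ω | ¬ Q ω} = 0 := ae_iff.mp hQae
      rw [hν, cond_apply hA_meas] at h0
      rcases mul_eq_zero.mp h0 with h | h
      · exact absurd h (by simp [hμA])
      · exact h
    · have hq0γ : q0 γ = 0 := le_antisymm (not_lt.mp hγpos) (hq0_nonneg γ)
      refine measure_mono_null Set.inter_subset_left ?_
      rw [hΥ_law γ, hq0γ, ENNReal.ofReal_zero]
  rw [ae_iff]
  have hsub : {ω | ¬ Q ω} ⊆ ⋃ γ : P, {ω | Υ ω = γ} ∩ {ω | ¬ Q ω} :=
    fun ω hω => Set.mem_iUnion.mpr ⟨Υ ω, rfl, hω⟩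
  refine le_antisymm (le_trans (measure_mono hsub) (le_trans (measure_iUnion_le _) ?_)) zero_le
  simp [key]
end

section
/- Asymptotic stability under parameter misspecification: in the setting of the previous statement, if $\hat q_\alpha^{\hat\theta}(0) \ne 0$ for all $\alpha$ and the identifiability condition holds that for every $\alpha$, $\operatorname{argmin}_{\beta\in\mathcal{P}} S(\mathbb{P}_\alpha\|\mathbb{P}_\beta^{\hat\theta}) = \{\alpha\}$ (i.e., $S(\mathbb{P}_\alpha\|\mathbb{P}_\alpha^{\hat\theta}) < S(\mathbb{P}_\alpha\|\mathbb{P}_\beta^{\hat\theta})$ for all $\beta\ne\alpha$), then almost surely $\hat q_\Upsilon^{\hat\theta}(n) \to 1$, i.e., $\hat\rho_n^{\hat\theta} \to \ket{\Upsilon}\bra{\Upsilon}$. -/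
open MeasureTheory Filter
open scoped BigOperators Topology ENNReal

/-- asymptotic stability under parameter misspecification. If the
estimated filter (with misspecified outcome probabilities `p̂ = p^θ̂`, driven by
the true outcomes) has all initial pointer populations nonzero, the per-pair
exponential rates `(1/n)ln(q̂_α(n)/q̂_Υ(n)) → S(ℙ_Υ‖ℙ^θ̂_Υ) - S(ℙ_Υ‖ℙ^θ̂_α)`
hold a.s., and the identifiability condition
`S(ℙ_α‖ℙ^θ̂_α) < S(ℙ_α‖ℙ^θ̂_β)` for all `β ≠ α` holds, then almost surely
`q̂_Υ(n) → 1`, i.e. `ρ̂^θ̂_n → |Υ⟩⟨Υ|`. -/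
theorem stmt19 {Y P : Type*} [Fintype Y] [Fintype P]
    [MeasurableSpace Y] [MeasurableSingletonClass Y]
    [MeasurableSpace P] [MeasurableSingletonClass P]
    (p phat : Y → P → ℝ)
    (hp_nonneg : ∀ i β, 0 ≤ p i β) (hp_sum : ∀ β, ∑ i, p i β = 1)
    (hphat_nonneg : ∀ i β, 0 ≤ phat i β) (hphat_sum : ∀ β, ∑ i, phat i β = 1)
    (h_pos : ∀ i γ β, 0 < p i γ → 0 < phat i β)
    (μ : Measure (ℕ → Y)) [IsProbabilityMeasure μ]
    -- `Υ` is the pointer state selected by the true trajectory: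
    (Υ : (ℕ → Y) → P) (hΥ_meas : Measurable Υ)
    -- the estimated pointer populations, probability vectors with nonvanishing
    -- initial entries:
    (qhat : ℕ → (ℕ → Y) → P → ℝ)
    (hqhat_nonneg : ∀ n ω β, 0 ≤ qhat n ω β)
    (hqhat_sum : ∀ n ω, ∑ β, qhat n ω β = 1)
    (hqhat0_ne : ∀ ω α, qhat 0 ω α ≠ 0)
    (hqhat_pos : ∀ n ω β, 0 < qhat n ω β)
    -- the per-pair exponential rates, as established in the rate theorem:
    (h_rate : ∀ᵐ ω ∂μ, ∀ α,
      Tendsto (fun n : ℕ => (1 / (n : ℝ)) *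
          Real.log (qhat n ω α / qhat n ω (Υ ω)))
        atTop
        (𝓝 ((∑ i, p i (Υ ω) * Real.log (p i (Υ ω) / phat i (Υ ω)))
          - ∑ i, p i (Υ ω) * Real.log (p i (Υ ω) / phat i α))))
    -- identifiability: for every `α`, `β ↦ S(ℙ_α‖ℙ^θ̂_β)` is uniquely minimized
    -- at `β = α`:
    (h_ident : ∀ α β, β ≠ α →
      (∑ i, p i α * Real.log (p i α / phat i α))
        < ∑ i, p i α * Real.log (p i α / phat i β)) :
    ∀ᵐ ω ∂μ, Tendsto (fun n => qhat n ω (Υ ω)) atTop (𝓝 1) := by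
  classical
  filter_upwards [h_rate] with ω hω
  -- each off-pointer population tends to 0
  have hzero : ∀ α, α ≠ Υ ω → Tendsto (fun n => qhat n ω α) atTop (𝓝 0) := by
    intro α hα
    have hc : ((∑ i, p i (Υ ω) * Real.log (p i (Υ ω) / phat i (Υ ω)))
        - ∑ i, p i (Υ ω) * Real.log (p i (Υ ω) / phat i α)) < 0 :=
      sub_neg.mpr (h_ident (Υ ω) α hα)
    have hbot : Tendsto (fun n : ℕ =>
        Real.log (qhat n ω α / qhat n ω (Υ ω))) atTop atBot := by
      have := (tendsto_natCast_atTop_atTop (R := ℝ)).atTop_mul_neg hc (hω α)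
      refine this.congr' ?_
      filter_upwards [eventually_ge_atTop 1] with n hn
      have hn' : (n : ℝ) ≠ 0 := by positivity
      field_simp
    have hr0 : Tendsto (fun n : ℕ => qhat n ω α / qhat n ω (Υ ω)) atTop (𝓝 0) := by
      have := Real.tendsto_exp_atBot.comp hbot
      refine this.congr fun n => ?_
      exact Real.exp_log (div_pos (hqhat_pos n ω α) (hqhat_pos n ω (Υ ω)))
    refine squeeze_zero (fun n => hqhat_nonneg n ω α) (fun n => ?_) hr0
    have h1 : qhat n ω (Υ ω) ≤ 1 := by
      rw [← hqhat_sum n ω]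
      exact Finset.single_le_sum (fun β _ => hqhat_nonneg n ω β) (Finset.mem_univ _)
    calc qhat n ω α = (qhat n ω α / qhat n ω (Υ ω)) * qhat n ω (Υ ω) :=
          (div_mul_cancel₀ _ (hqhat_pos n ω (Υ ω)).ne').symm
      _ ≤ (qhat n ω α / qhat n ω (Υ ω)) * 1 := by
          exact mul_le_mul_of_nonneg_left h1
            (div_nonneg (hqhat_nonneg n ω α) (hqhat_nonneg n ω (Υ ω)))
      _ = qhat n ω α / qhat n ω (Υ ω) := mul_one _
  have hsum : Tendsto (fun n => ∑ α ∈ Finset.univ.erase (Υ ω), qhat n ω α)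
      atTop (𝓝 0) := by
    have := tendsto_finset_sum (Finset.univ.erase (Υ ω))
      (fun α hα => hzero α (Finset.ne_of_mem_erase hα))
    simpa using this
  have heq : ∀ n, qhat n ω (Υ ω)
      = 1 - ∑ α ∈ Finset.univ.erase (Υ ω), qhat n ω α := by
    intro n
    have := Finset.add_sum_erase Finset.univ (qhat n ω) (Finset.mem_univ (Υ ω))
    rw [hqhat_sum n ω] at this
    linarith
  have : Tendsto (fun n => 1 - ∑ α ∈ Finset.univ.erase (Υ ω), qhat n ω α)
      atTop (𝓝 (1 - 0)) := tendsto_const_nhds.sub hsum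
  rw [sub_zero] at this
  exact this.congr fun n => (heq n).symm
end
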